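/- Let F be a field and a, b, c ∈ Fˣ with a²·b·c = 1, and assume it is not the case that b = a and c = a (so that s := diag(a, a, b, c) is a non-central element of SL_4(F)). If the induced linear endomorphism ⋀²s of the exterior square ⋀²(F⁴) has almost simple spectrum, i.e. at most one eigenvalue of ⋀²s has an eigenspace of dimension greater than 1, then b = c, b = a⁻¹ or b = −a⁻¹, and a⁴ ≠ 1. -/

import Mathlib

/-!
In the standard basis `eᵢ ∧ eⱼ` of `⋀²(F⁴)` the map `⋀²s` is diagonal with eigenvalues `dᵢdⱼ`
for `d = (a, a, b, c)`. The eigenvalue `ab` is carried by `e₀ ∧ e₂` and `e₁ ∧ e₂`, and `ac` by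
`e₀ ∧ e₃` and `e₁ ∧ e₃`, so almost simplicity forces `ab = ac`, i.e. `b = c`, and then
`(ab)² = a²bc = 1`. If moreover `a⁴ = 1`, then `a² = bc`, so `e₀ ∧ e₁` and `e₂ ∧ e₃` share an
eigenvalue as well and `a² = ab`, which makes `s` central.
-/

open ExteriorAlgebra

/-- The linear endomorphism of the `n`-th exterior power induced by a linear
endomorphism `f` of `M` (functoriality of the exterior power). -/
noncomputable def extPowMap {R M : Type*} [CommRing R] [AddCommGroup M] [Module R M]
    (n : ℕ) (f : M →ₗ[R] M) : ⋀[R]^n M →ₗ[R] ⋀[R]^n M :=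
  (ExteriorAlgebra.map f).toLinearMap.restrict (p := ⋀[R]^n M) (q := ⋀[R]^n M)
    (fun x hx => by
      have hmono : ∀ S T : Submodule R (ExteriorAlgebra R M), S ≤ T →
          ∀ k : ℕ, S ^ k ≤ T ^ k := by
        intro S T h k
        induction k with
        | zero => simp
        | succ k ih => rw [pow_succ, pow_succ]; exact mul_le_mul' ih h
      have key : Submodule.map (ExteriorAlgebra.map f).toLinearMap (⋀[R]^n M) ≤ ⋀[R]^n M := by
        rw [show (⋀[R]^n M) = (LinearMap.range (ι R : M →ₗ[R] ExteriorAlgebra R M)) ^ n from rfl,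
          Submodule.map_pow, ExteriorAlgebra.ι_range_map_map]
        exact hmono _ _ (le_trans (Submodule.map_mono le_top)
          (by rw [Submodule.map_top])) n
      exact key (Submodule.mem_map_of_mem hx))

open Module Set

theorem extPowMap_eq_map {R M : Type*} [CommRing R] [AddCommGroup M] [Module R M]
    (n : ℕ) (f : M →ₗ[R] M) : extPowMap n f = exteriorPower.map n f := by
  ext v
  rw [LinearMap.compAlternatingMap_apply, LinearMap.compAlternatingMap_apply,
    exteriorPower.map_apply_ιMulti]
  exact ExteriorAlgebra.map_apply_ιMulti f v

theorem Module.Basis.exteriorPower_map_apply_of_apply_eq_smul {R M I : Type*} [CommRing R]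
    [AddCommGroup M] [Module R M] [LinearOrder I] (b : Basis I R M) {f : M →ₗ[R] M} {μ : I → R}
    (hf : ∀ i, f (b i) = μ i • b i) {n : ℕ} (s : powersetCard I n) :
    exteriorPower.map n f (b.exteriorPower n s) = (∏ i ∈ s.val, μ i) • b.exteriorPower n s := by
  have hprod : ∏ i ∈ s.val, μ i = ∏ j, μ (powersetCard.ofFinEmbEquiv.symm s j) := by
    rw [← Finset.prod_coe_sort, ← (s.val.orderIsoOfFin s.prop).toEquiv.prod_comp]
    rfl
  rw [exteriorPower.basis_apply, exteriorPower.map_apply_ιMulti_family, hprod,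
    exteriorPower.ιMulti_family, exteriorPower.ιMulti_family, ← AlternatingMap.map_smul_univ]
  congr 1
  funext j
  exact hf _

theorem Matrix.toLin'_diagonal_basisFun {R ι : Type*} [CommSemiring R] [Fintype ι]
    [DecidableEq ι] (d : ι → R) (i : ι) :
    toLin' (diagonal d) (Pi.basisFun R ι i) = d i • Pi.basisFun R ι i := by
  simp [← Pi.single_smul]

namespace Module.End

variable {K V : Type*} [Field K] [AddCommGroup V] [Module K V]

def HasAlmostSimpleSpectrum (f : End K V) : Prop :=
  ∀ x y : K, 1 < finrank K (f.eigenspace x) → 1 < finrank K (f.eigenspace y) → x = y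

theorem one_lt_finrank_eigenspace_of_basis [FiniteDimensional K V] {ι : Type*}
    (b : Basis ι K V) {f : End K V} {μ : K} {i j : ι}
    (hij : i ≠ j) (hi : f (b i) = μ • b i) (hj : f (b j) = μ • b j) :
    1 < finrank K (f.eigenspace μ) := by
  have hli : LinearIndependent K ![(⟨b i, mem_eigenspace_iff.2 hi⟩ : f.eigenspace μ),
      ⟨b j, mem_eigenspace_iff.2 hj⟩] := by
    refine LinearIndependent.of_comp (f.eigenspace μ).subtype ?_
    convert b.linearIndependent.comp _ (injective_pair_iff_ne.2 hij) using 1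
    ext k
    fin_cases k <;> rfl
  exact (by simpa using hli.fintype_card_le_finrank : 2 ≤ _)

theorem HasAlmostSimpleSpectrum.eq_of_basis [FiniteDimensional K V] {ι : Type*} {f : End K V}
    (hf : f.HasAlmostSimpleSpectrum) (b : Basis ι K V) {μ : ι → K}
    (hb : ∀ i, f (b i) = μ i • b i) {i j i' j' : ι} (hij : i ≠ j) (hij' : i' ≠ j')
    (h : μ i = μ j) (h' : μ i' = μ j') : μ i = μ i' :=
  hf _ _ (one_lt_finrank_eigenspace_of_basis b hij (hb i) (h ▸ hb j))
    (one_lt_finrank_eigenspace_of_basis b hij' (hb i') (h' ▸ hb j'))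

theorem HasAlmostSimpleSpectrum.prod_eq_of_extPowMap_diagonal {ι : Type*} [Fintype ι]
    [LinearOrder ι] {n : ℕ} {d : ι → K}
    (hf : HasAlmostSimpleSpectrum (extPowMap n (Matrix.toLin' (Matrix.diagonal d))))
    {s t s' t' : powersetCard ι n} (hst : s ≠ t) (hst' : s' ≠ t')
    (h : ∏ i ∈ s.val, d i = ∏ i ∈ t.val, d i) (h' : ∏ i ∈ s'.val, d i = ∏ i ∈ t'.val, d i) :
    ∏ i ∈ s.val, d i = ∏ i ∈ s'.val, d i := by
  rw [extPowMap_eq_map] at hf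
  exact hf.eq_of_basis _ ((Pi.basisFun K ι).exteriorPower_map_apply_of_apply_eq_smul
    (Matrix.toLin'_diagonal_basisFun d)) hst hst' h h'

end Module.End

theorem Units.eq_inv_or_eq_neg_inv_of_mul_sq_eq_one {R : Type*} [Ring R] [NoZeroDivisors R]
    {a b : Rˣ} (h : (a * b) ^ 2 = 1) : b = a⁻¹ ∨ b = -a⁻¹ := by
  have hR : ((a * b : Rˣ) : R) ^ 2 = 1 := by rw [← Units.val_pow_eq_pow_val, h, Units.val_one]
  rcases sq_eq_one_iff.1 hR with h1 | h1
  · exact Or.inl (eq_inv_of_mul_eq_one_right (Units.ext h1))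
  · exact Or.inr ((eq_inv_mul_of_mul_eq (Units.ext h1 : a * b = -1)).trans (mul_neg_one _))

theorem extPow_sq_almost_simple_classification
    {F : Type*} [Field F] (a b c : Fˣ)
    (habc : a ^ 2 * b * c = 1)
    (hnc : ¬ (b = a ∧ c = a))
    (g : Module.End F (⋀[F]^2 (Fin 4 → F)))
    (hg : g = extPowMap 2
      (Matrix.toLin' (Matrix.diagonal ![(a : F), (a : F), (b : F), (c : F)])))
    (hAS : ∀ x y : F,
      1 < Module.finrank F (Module.End.eigenspace g x) →
      1 < Module.finrank F (Module.End.eigenspace g y) → x = y) :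
    b = c ∧ (b = a⁻¹ ∨ b = -a⁻¹) ∧ a ^ 4 ≠ 1 := by
  subst hg
  have hf : Module.End.HasAlmostSimpleSpectrum
      (extPowMap 2 (Matrix.toLin' (Matrix.diagonal ![(a : F), a, b, c]))) := hAS
  have hbc : b = c := Units.ext <| by
    simpa using hf.prod_eq_of_extPowMap_diagonal (s := ⟨{0, 2}, rfl⟩) (t := ⟨{1, 2}, rfl⟩)
      (s' := ⟨{0, 3}, rfl⟩) (t' := ⟨{1, 3}, rfl⟩) (by decide) (by decide) (by simp) (by simp)
  have hb : b = a⁻¹ ∨ b = -a⁻¹ :=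
    Units.eq_inv_or_eq_neg_inv_of_mul_sq_eq_one (by rw [← habc, hbc, mul_pow, sq c, mul_assoc])
  refine ⟨hbc, hb, fun ha4 => hnc ?_⟩
  have hbc_eq : b * c = a * a :=
    mul_left_cancel (a := a ^ 2) (by rw [← mul_assoc, habc, ← ha4]; group)
  have hab : a = b := Units.ext <| by
    simpa using hf.prod_eq_of_extPowMap_diagonal (s := ⟨{0, 1}, rfl⟩) (t := ⟨{2, 3}, rfl⟩)
      (s' := ⟨{0, 2}, rfl⟩) (t' := ⟨{1, 2}, rfl⟩) (by decide) (by decide)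
      (by simp [← Units.val_mul, hbc_eq]) (by simp)
  exact ⟨hab.symm, hbc ▸ hab.symm⟩
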